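/- Let 𝓜 be a finite set of nonsingular n×n real matrices and suppose there exist unit vectors z^{(1)}, z^{(2)} with ρ̃_{z^{(1)}}(𝓜) < ρ̃_{z^{(2)}}(𝓜). Then the function x ↦ ρ̃_x(𝓜) is discontinuous at every point of the cone D = { λ w : λ > 0, w ∈ clos(O⁻(z^{(1)})) ∩ clos(O⁺(z^{(2)})) }. -/

import Mathlib

open Real MeasureTheory

noncomputable def appE {n : ℕ} (A : Matrix (Fin n) (Fin n) ℝ) (x : EuclideanSpace ℝ (Fin n)) :
    EuclideanSpace ℝ (Fin n) :=
  Matrix.toEuclideanLin A x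

def IsTraj {n : ℕ} (M : Set (Matrix (Fin n) (Fin n) ℝ)) (x : ℕ → EuclideanSpace ℝ (Fin n)) : Prop :=
  ∀ k : ℕ, ∃ A ∈ M, x (k + 1) = appE A (x k)

noncomputable def stabRadius {n : ℕ} (M : Set (Matrix (Fin n) (Fin n) ℝ)) : ℝ :=
  sInf {l : ℝ | 0 ≤ l ∧ ∃ C > (0:ℝ), ∀ x0 : EuclideanSpace ℝ (Fin n),
    ∃ x : ℕ → EuclideanSpace ℝ (Fin n), x 0 = x0 ∧ IsTraj M x ∧
      ∀ k : ℕ, ‖x k‖ ≤ C * l ^ k * ‖x0‖}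

noncomputable def stabRadiusAt {n : ℕ} (M : Set (Matrix (Fin n) (Fin n) ℝ))
    (x0 : EuclideanSpace ℝ (Fin n)) : ℝ :=
  sInf {l : ℝ | 0 ≤ l ∧ ∃ x : ℕ → EuclideanSpace ℝ (Fin n), x 0 = x0 ∧ IsTraj M x ∧
    ∃ C > (0:ℝ), ∀ k : ℕ, ‖x k‖ ≤ C * l ^ k * ‖x0‖}

def OPlus {n : ℕ} (M : Set (Matrix (Fin n) (Fin n) ℝ)) (z : EuclideanSpace ℝ (Fin n)) :
    Set (EuclideanSpace ℝ (Fin n)) :=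
  {w | ∃ l : List (Matrix (Fin n) (Fin n) ℝ), (∀ B ∈ l, B ∈ M) ∧
    w = ‖appE l.prod z‖⁻¹ • appE l.prod z}

def OMinus {n : ℕ} (M : Set (Matrix (Fin n) (Fin n) ℝ)) (z : EuclideanSpace ℝ (Fin n)) :
    Set (EuclideanSpace ℝ (Fin n)) :=
  {w | ∃ l : List (Matrix (Fin n) (Fin n) ℝ), (∀ B ∈ l, B ∈ M) ∧
    w = ‖appE l.prod⁻¹ z‖⁻¹ • appE l.prod⁻¹ z}

/-!
The rate `stabRadiusAt M x` is constant on rays and can only decrease along a trajectory: a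
trajectory from `A x` with growth rate `l > 0` extends backwards to one from `x` with the same
rate. Hence `stabRadiusAt M ≤ stabRadiusAt M z1` on `OMinus M z1` and
`stabRadiusAt M z2 ≤ stabRadiusAt M` on `OPlus M z2`. Continuity at `lam • w` would give
continuity at `w`, and passing to the limit along both orbits would force
`stabRadiusAt M z2 ≤ stabRadiusAt M w ≤ stabRadiusAt M z1`.
-/

open Matrix

section Action

variable {n : ℕ}

theorem appE_eq_toEuclideanCLM (A : Matrix (Fin n) (Fin n) ℝ) :
    appE A = toEuclideanCLM (𝕜 := ℝ) A := rfl

theorem appE_one (x : EuclideanSpace ℝ (Fin n)) : appE 1 x = x := by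
  simp [appE_eq_toEuclideanCLM]

theorem appE_mul (A B : Matrix (Fin n) (Fin n) ℝ) (x : EuclideanSpace ℝ (Fin n)) :
    appE (A * B) x = appE A (appE B x) := by
  simp [appE_eq_toEuclideanCLM]

theorem appE_zero (A : Matrix (Fin n) (Fin n) ℝ) : appE A 0 = 0 := by
  simp [appE_eq_toEuclideanCLM]

theorem appE_smul (A : Matrix (Fin n) (Fin n) ℝ) (c : ℝ) (x : EuclideanSpace ℝ (Fin n)) :
    appE A (c • x) = c • appE A x := by
  simp [appE_eq_toEuclideanCLM]

theorem norm_appE_le (A : Matrix (Fin n) (Fin n) ℝ) (x : EuclideanSpace ℝ (Fin n)) :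
    ‖appE A x‖ ≤ ‖toEuclideanCLM (𝕜 := ℝ) A‖ * ‖x‖ :=
  (toEuclideanCLM (𝕜 := ℝ) A).le_opNorm x

theorem appE_nonsing_inv_appE {A : Matrix (Fin n) (Fin n) ℝ} (hA : IsUnit A.det)
    (x : EuclideanSpace ℝ (Fin n)) : appE A⁻¹ (appE A x) = x := by
  rw [← appE_mul, nonsing_inv_mul A hA, appE_one]

theorem appE_appE_nonsing_inv {A : Matrix (Fin n) (Fin n) ℝ} (hA : IsUnit A.det)
    (x : EuclideanSpace ℝ (Fin n)) : appE A (appE A⁻¹ x) = x := by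
  rw [← appE_mul, mul_nonsing_inv A hA, appE_one]

theorem isUnit_det_list_prod {M : Set (Matrix (Fin n) (Fin n) ℝ)} (hM : ∀ A ∈ M, A.det ≠ 0)
    {l : List (Matrix (Fin n) (Fin n) ℝ)} (hl : ∀ B ∈ l, B ∈ M) : IsUnit l.prod.det :=
  (isUnit_iff_isUnit_det _).mp <|
    List.prod_isUnit fun B hB => (isUnit_iff_isUnit_det B).mpr (hM B (hl B hB)).isUnit

end Action

def growthRatesAt {n : ℕ} (M : Set (Matrix (Fin n) (Fin n) ℝ))
    (x0 : EuclideanSpace ℝ (Fin n)) : Set ℝ :=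
  {l : ℝ | 0 ≤ l ∧ ∃ x : ℕ → EuclideanSpace ℝ (Fin n), x 0 = x0 ∧ IsTraj M x ∧
    ∃ C > (0:ℝ), ∀ k : ℕ, ‖x k‖ ≤ C * l ^ k * ‖x0‖}

section GrowthRates

variable {n : ℕ} {M : Set (Matrix (Fin n) (Fin n) ℝ)}

theorem stabRadiusAt_eq_sInf (M : Set (Matrix (Fin n) (Fin n) ℝ))
    (x0 : EuclideanSpace ℝ (Fin n)) : stabRadiusAt M x0 = sInf (growthRatesAt M x0) := rfl

theorem bddBelow_growthRatesAt (x0 : EuclideanSpace ℝ (Fin n)) :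
    BddBelow (growthRatesAt M x0) :=
  ⟨0, fun _ hl => hl.1⟩

theorem mem_growthRatesAt_of_le {x0 : EuclideanSpace ℝ (Fin n)} {l l' : ℝ}
    (hl : l ∈ growthRatesAt M x0) (hll' : l ≤ l') : l' ∈ growthRatesAt M x0 := by
  obtain ⟨hl0, x, hx0, hx, C, hC, hbound⟩ := hl
  refine ⟨hl0.trans hll', x, hx0, hx, C, hC, fun k => (hbound k).trans ?_⟩
  gcongr

theorem growthRatesAt_nonempty {A : Matrix (Fin n) (Fin n) ℝ} (hA : A ∈ M)
    (x0 : EuclideanSpace ℝ (Fin n)) : (growthRatesAt M x0).Nonempty := by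
  set K := ‖toEuclideanCLM (𝕜 := ℝ) A‖
  refine ⟨K, norm_nonneg _, fun k => (appE A)^[k] x0, rfl,
    fun k => ⟨A, hA, Function.iterate_succ_apply' _ _ _⟩, 1, one_pos, fun k => ?_⟩
  induction k with
  | zero => simp
  | succ k ih =>
    calc ‖(appE A)^[k + 1] x0‖ ≤ K * ‖(appE A)^[k] x0‖ := by
          rw [Function.iterate_succ_apply']; exact norm_appE_le A _
      _ ≤ K * (1 * K ^ k * ‖x0‖) := by gcongr
      _ = 1 * K ^ (k + 1) * ‖x0‖ := by ring

theorem growthRatesAt_subset_smul (x0 : EuclideanSpace ℝ (Fin n)) (c : ℝ) :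
    growthRatesAt M x0 ⊆ growthRatesAt M (c • x0) := by
  rintro l ⟨hl0, x, hx0, hx, C, hC, hbound⟩
  refine ⟨hl0, fun k => c • x k, congrArg (c • ·) hx0, fun k => ?_, C, hC, fun k => ?_⟩
  · obtain ⟨A, hA, hstep⟩ := hx k
    exact ⟨A, hA, by simp only [hstep, appE_smul]⟩
  · calc ‖c • x k‖ = ‖c‖ * ‖x k‖ := norm_smul c (x k)
      _ ≤ ‖c‖ * (C * l ^ k * ‖x0‖) := by gcongr; exact hbound k
      _ = C * l ^ k * ‖c • x0‖ := by rw [norm_smul]; ring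

theorem stabRadiusAt_smul (M : Set (Matrix (Fin n) (Fin n) ℝ)) {c : ℝ} (hc : c ≠ 0)
    (x0 : EuclideanSpace ℝ (Fin n)) : stabRadiusAt M (c • x0) = stabRadiusAt M x0 := by
  rw [stabRadiusAt_eq_sInf, stabRadiusAt_eq_sInf]
  refine congrArg sInf (Set.Subset.antisymm ?_ (growthRatesAt_subset_smul x0 c))
  have := growthRatesAt_subset_smul (M := M) (c • x0) c⁻¹
  rwa [inv_smul_smul₀ hc] at this

theorem mem_growthRatesAt_of_mem_appE {A : Matrix (Fin n) (Fin n) ℝ} (hA : A ∈ M)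
    {x0 : EuclideanSpace ℝ (Fin n)} {l : ℝ} (hl : l ∈ growthRatesAt M (appE A x0))
    (hpos : 0 < l) : l ∈ growthRatesAt M x0 := by
  obtain ⟨-, y, hy0, hy, C, hC, hbound⟩ := hl
  set K := ‖toEuclideanCLM (𝕜 := ℝ) A‖
  refine ⟨hpos.le, fun | 0 => x0 | k + 1 => y k, rfl, ?_, 1 + C * K / l, by positivity, ?_⟩
  · rintro (_ | k)
    · exact ⟨A, hA, hy0⟩
    · exact hy k
  · rintro (_ | k)
    · have : 0 ≤ C * K / l := by positivity
      simp only [pow_zero, mul_one]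
      exact le_mul_of_one_le_left (norm_nonneg x0) (by linarith)
    · calc ‖y k‖ ≤ C * l ^ k * ‖appE A x0‖ := hbound k
        _ ≤ C * l ^ k * (K * ‖x0‖) := by gcongr; exact norm_appE_le A x0
        _ = C * K / l * l ^ (k + 1) * ‖x0‖ := by field_simp; ring
        _ ≤ (1 + C * K / l) * l ^ (k + 1) * ‖x0‖ := by gcongr; linarith

theorem stabRadiusAt_le_appE {A : Matrix (Fin n) (Fin n) ℝ} (hA : A ∈ M)
    (x0 : EuclideanSpace ℝ (Fin n)) : stabRadiusAt M x0 ≤ stabRadiusAt M (appE A x0) := by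
  rw [stabRadiusAt_eq_sInf, stabRadiusAt_eq_sInf]
  -- A zero rate need not survive prepending `x0`, so pass through the positive rate `l + ε`.
  refine le_csInf (growthRatesAt_nonempty hA _) fun l hl => le_of_forall_pos_le_add fun ε hε => ?_
  refine csInf_le (bddBelow_growthRatesAt x0) (mem_growthRatesAt_of_mem_appE hA ?_ ?_)
  · exact mem_growthRatesAt_of_le hl (le_add_of_nonneg_right hε.le)
  · exact add_pos_of_nonneg_of_pos hl.1 hε

theorem stabRadiusAt_le_appE_list_prod {l : List (Matrix (Fin n) (Fin n) ℝ)}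
    (hl : ∀ B ∈ l, B ∈ M) (x0 : EuclideanSpace ℝ (Fin n)) :
    stabRadiusAt M x0 ≤ stabRadiusAt M (appE l.prod x0) := by
  induction l with
  | nil => rw [List.prod_nil, appE_one]
  | cons A l ih =>
    rw [List.prod_cons, appE_mul]
    exact (ih fun B hB => hl B (List.mem_cons_of_mem A hB)).trans
      (stabRadiusAt_le_appE (hl A List.mem_cons_self) _)

theorem stabRadiusAt_normalize {v : EuclideanSpace ℝ (Fin n)} (hv : v ≠ 0) :
    stabRadiusAt M (‖v‖⁻¹ • v) = stabRadiusAt M v :=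
  stabRadiusAt_smul M (inv_ne_zero (norm_ne_zero_iff.mpr hv)) v

theorem stabRadiusAt_le_of_mem_OMinus (hM : ∀ A ∈ M, A.det ≠ 0)
    {z w : EuclideanSpace ℝ (Fin n)} (hz : z ≠ 0) (hw : w ∈ OMinus M z) :
    stabRadiusAt M w ≤ stabRadiusAt M z := by
  obtain ⟨l, hl, rfl⟩ := hw
  have hz_eq : appE l.prod (appE l.prod⁻¹ z) = z :=
    appE_appE_nonsing_inv (isUnit_det_list_prod hM hl) z
  have hv : appE l.prod⁻¹ z ≠ 0 := fun h => hz (by rw [← hz_eq, h, appE_zero])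
  calc stabRadiusAt M (‖appE l.prod⁻¹ z‖⁻¹ • appE l.prod⁻¹ z)
      = stabRadiusAt M (appE l.prod⁻¹ z) := stabRadiusAt_normalize hv
    _ ≤ stabRadiusAt M (appE l.prod (appE l.prod⁻¹ z)) := stabRadiusAt_le_appE_list_prod hl _
    _ = stabRadiusAt M z := by rw [hz_eq]

theorem stabRadiusAt_le_of_mem_OPlus (hM : ∀ A ∈ M, A.det ≠ 0)
    {z w : EuclideanSpace ℝ (Fin n)} (hz : z ≠ 0) (hw : w ∈ OPlus M z) :
    stabRadiusAt M z ≤ stabRadiusAt M w := by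
  obtain ⟨l, hl, rfl⟩ := hw
  have hv : appE l.prod z ≠ 0 := fun h => hz <| by
    rw [← appE_nonsing_inv_appE (isUnit_det_list_prod hM hl) z, h, appE_zero]
  rw [stabRadiusAt_normalize hv]
  exact stabRadiusAt_le_appE_list_prod hl z

end GrowthRates

theorem stmt16_general {n : ℕ} (M : Set (Matrix (Fin n) (Fin n) ℝ))
    (hM : ∀ A ∈ M, A.det ≠ 0)
    (z1 z2 : EuclideanSpace ℝ (Fin n)) (hz1 : ‖z1‖ = 1) (hz2 : ‖z2‖ = 1)
    (hlt : stabRadiusAt M z1 < stabRadiusAt M z2) :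
    ∀ x ∈ {x : EuclideanSpace ℝ (Fin n) | ∃ lam > (0 : ℝ),
        ∃ w ∈ closure (OMinus M z1) ∩ closure (OPlus M z2), x = lam • w},
      ¬ ContinuousAt (fun y => stabRadiusAt M y) x := by
  rintro _ ⟨lam, hlam, w, ⟨hw1, hw2⟩, rfl⟩ hcont
  have hcont_w : ContinuousAt (stabRadiusAt M) w := by
    simpa only [Function.comp_def, stabRadiusAt_smul M hlam.ne'] using
      hcont.comp (continuous_const_smul lam).continuousAt
  have hz1' : z1 ≠ 0 := fun h => by simp [h] at hz1
  have hz2' : z2 ≠ 0 := fun h => by simp [h] at hz2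
  have hle : stabRadiusAt M w ∈ Set.Iic (stabRadiusAt M z1) := by
    rw [← closure_Iic]
    exact hcont_w.continuousWithinAt.mem_closure hw1
      fun v hv => stabRadiusAt_le_of_mem_OMinus hM hz1' hv
  have hge : stabRadiusAt M w ∈ Set.Ici (stabRadiusAt M z2) := by
    rw [← closure_Ici]
    exact hcont_w.continuousWithinAt.mem_closure hw2
      fun v hv => stabRadiusAt_le_of_mem_OPlus hM hz2' hv
  exact (hlt.trans_le (hge.trans hle)).false

theorem stmt16 {n : ℕ} (M : Set (Matrix (Fin n) (Fin n) ℝ)) (hfin : M.Finite)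
    (hM : ∀ A ∈ M, A.det ≠ 0)
    (z1 z2 : EuclideanSpace ℝ (Fin n)) (hz1 : ‖z1‖ = 1) (hz2 : ‖z2‖ = 1)
    (hlt : stabRadiusAt M z1 < stabRadiusAt M z2) :
    ∀ x ∈ {x : EuclideanSpace ℝ (Fin n) | ∃ lam > (0 : ℝ),
        ∃ w ∈ closure (OMinus M z1) ∩ closure (OPlus M z2), x = lam • w},
      ¬ ContinuousAt (fun y => stabRadiusAt M y) x :=
  stmt16_general M hM z1 z2 hz1 hz2 hlt
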